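/- arXiv:2206.04988 — 4 statements merged into one kernel-verified Lean document; each statement's English description precedes it below -/
import Mathlib

section
/- (Homomorphism theorem for Boolean conjunctive queries) Two Boolean conjunctive queries q and q' are equivalent (i.e., for every database D, q has a solution on D iff q' has a solution on D) if and only if there is a homomorphism from the canonical structure of q to that of q' and a homomorphism from the canonical structure of q' to that of q. -/
structure Signature where
  symbols : Type
  arity : symbols → ℕ

structure Struc (σ : Signature) (α : Type) where
  rel : ∀ R : σ.symbols, Set (Fin (σ.arity R) → α)

def IsHom {σ : Signature} {α β : Type} (A : Struc σ α) (B : Struc σ β) (f : α → β) : Prop :=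
  ∀ (R : σ.symbols) (t : Fin (σ.arity R) → α), t ∈ A.rel R → (fun i => f (t i)) ∈ B.rel R

structure CQ (σ : Signature) (V : Type) where
  atoms : Set ((R : σ.symbols) × (Fin (σ.arity R) → V))
  free : Set V

def IsEndo {σ : Signature} {V : Type} (q : CQ σ V) (ν : V → V) : Prop :=
  ∀ a ∈ q.atoms,
    (⟨a.1, fun i => ν (a.2 i)⟩ : (R : σ.symbols) × (Fin (σ.arity R) → V)) ∈ q.atoms

def IsSol {σ : Signature} {V α : Type} (q : CQ σ V) (D : Struc σ α) (μ : V → α) : Prop :=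
  ∀ a ∈ q.atoms, (fun i => μ (a.2 i)) ∈ D.rel a.1

/-- The canonical structure of a conjunctive query: domain = variables, facts = atoms. -/
def canon {σ : Signature} {V : Type} (q : CQ σ V) : Struc σ V :=
  ⟨fun R => {t | (⟨R, t⟩ : (R : σ.symbols) × (Fin (σ.arity R) → V)) ∈ q.atoms}⟩

/-- Homomorphism theorem: two Boolean conjunctive queries are equivalent iff there are
homomorphisms between their canonical structures in both directions. -/
theorem homomorphism_theorem {σ : Signature} {V V' : Type} (q : CQ σ V) (q' : CQ σ V')
    (hBool : q.free = (∅ : Set V)) (hBool' : q'.free = (∅ : Set V')) :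
    (∀ (α : Type) (D : Struc σ α),
        (∃ μ : V → α, IsSol q D μ) ↔ (∃ μ' : V' → α, IsSol q' D μ')) ↔
      ((∃ f : V → V', IsHom (canon q) (canon q') f) ∧
        (∃ g : V' → V, IsHom (canon q') (canon q) g)) := by
  have sol_iff_hom : ∀ {W W' : Type} (p : CQ σ W) (p' : CQ σ W') (f : W → W'),
      IsSol p (canon p') f ↔ IsHom (canon p) (canon p') f := by
    intro W W' p p' f
    constructor
    · intro h R t ht; exact h ⟨R, t⟩ ht
    · intro h a ha; exact h a.1 a.2 ha
  have self_sol : ∀ {W : Type} (p : CQ σ W), IsSol p (canon p) id := by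
    intro W p a ha; exact ha
  constructor
  · intro h
    constructor
    · obtain ⟨f, hf⟩ := (h V' (canon q')).mpr ⟨id, self_sol q'⟩
      exact ⟨f, (sol_iff_hom q q' f).mp hf⟩
    · obtain ⟨g, hg⟩ := (h V (canon q)).mp ⟨id, self_sol q⟩
      exact ⟨g, (sol_iff_hom q' q g).mp hg⟩
  · rintro ⟨⟨f, hf⟩, ⟨g, hg⟩⟩ α D
    constructor
    · rintro ⟨μ, hμ⟩
      refine ⟨μ ∘ g, ?_⟩
      intro a ha
      exact hμ ⟨a.1, fun i => g (a.2 i)⟩ (hg a.1 a.2 ha)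
    · rintro ⟨μ', hμ'⟩
      refine ⟨μ' ∘ f, ?_⟩
      intro a ha
      exact hμ' ⟨a.1, fun i => f (a.2 i)⟩ (hf a.1 a.2 ha)
end

section
/- If C and C' are finite core structures that are homomorphically equivalent (there are homomorphisms C → C' and C' → C), then C and C' are isomorphic. -/
/-- Homomorphically equivalent finite cores are isomorphic. -/
theorem cores_hom_equiv_iso {σ : Signature} {α β : Type} [Fintype α] [Fintype β]
    (C : Struc σ α) (C' : Struc σ β)
    (hcore : ∀ f : α → α, IsHom C C f →
      Function.Bijective f ∧ ∃ ι : α → α,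
        Function.LeftInverse ι f ∧ Function.RightInverse ι f ∧ IsHom C C ι)
    (hcore' : ∀ f : β → β, IsHom C' C' f →
      Function.Bijective f ∧ ∃ ι : β → β,
        Function.LeftInverse ι f ∧ Function.RightInverse ι f ∧ IsHom C' C' ι)
    (f : α → β) (hf : IsHom C C' f) (g : β → α) (hg : IsHom C' C g) :
    ∃ h : α → β, Function.Bijective h ∧ IsHom C C' h ∧
      ∃ h' : β → α, Function.LeftInverse h' h ∧ Function.RightInverse h' h ∧
        IsHom C' C h' := by
  have hgf : IsHom C C (g ∘ f) := fun R t ht => hg R _ (hf R t ht)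
  have hfg : IsHom C' C' (f ∘ g) := fun R t ht => hf R _ (hg R t ht)
  obtain ⟨hbij, ι, hli, hri, hιhom⟩ := hcore (g ∘ f) hgf
  obtain ⟨hbij', _⟩ := hcore' (f ∘ g) hfg
  have hfinj : Function.Injective f := fun a b hab => hbij.1 (by simp [Function.comp, hab])
  have hfsurj : Function.Surjective f := fun b => by
    obtain ⟨b', hb'⟩ := hbij'.2 b
    exact ⟨g b', hb'⟩
  refine ⟨f, ⟨hfinj, hfsurj⟩, hf, ι ∘ g, ?_, ?_, fun R t ht => hιhom R _ (hg R t ht)⟩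
  · intro a; exact hli a
  · exact Function.LeftInverse.rightInverse_of_surjective (fun a => hli a) hfsurj
end

section
/- (Analysis of the encoding trick) With q, q', D', D as in the encoding trick, let μ be an assignment witnessing a solution of q over D. Writing μ(x) = (d(x), ν(x)) for each variable x of q, the map ν is an endomorphism of q. Moreover, if ν is an automorphism of q, then the tuple (d(ν^{-1}(x_1)),...,d(ν^{-1}(x_k))), where x_1,...,x_k are the free variables of q, is a solution of q' over D'. -/
/-- The set of solutions q(D): restrictions to the free variables of assignments making
every atom a fact of D. -/
def answers {σ : Signature} {V α : Type} (q : CQ σ V) (D : Struc σ α) :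
    Set (q.free → α) :=
  { f | ∃ μ : V → α, IsSol q D μ ∧ ∀ x : q.free, f x = μ x.1 }

/-- A database for the associated self-join-free query q': one relation per atom of q
(each atom gets its own fresh symbol, of the same arity). -/
def SJFdb (σ : Signature) {V : Type} (q : CQ σ V) (α : Type) : Type _ :=
  (a : {a // a ∈ q.atoms}) → Set (Fin (σ.arity a.1.1) → α)

/-- An assignment is a solution of the associated self-join-free query q' over D' if each
atom (with its fresh symbol) is mapped to a fact of the corresponding relation of D'. -/
def sjfSol {σ : Signature} {V α : Type} (q : CQ σ V) (D' : SJFdb σ q α) (μ : V → α) : Prop :=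
  ∀ a : {a // a ∈ q.atoms}, (fun i => μ (a.1.2 i)) ∈ D' a

/-- The set of solutions q'(D') of the associated self-join-free query. -/
def sjfAnswers {σ : Signature} {V α : Type} (q : CQ σ V) (D' : SJFdb σ q α) :
    Set (q.free → α) :=
  { f | ∃ μ : V → α, sjfSol q D' μ ∧ ∀ x : q.free, f x = μ x.1 }

/-- The encoding trick: the database D over pairs (element, variable) containing the fact
R((a₁,z₁),…,(a_l,z_l)) for each atom R(z₁,…,z_l) of q and each fact R_i(a₁,…,a_l) of D'. -/
def encDB {σ : Signature} {V α : Type} (q : CQ σ V) (D' : SJFdb σ q α) :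
    Struc σ (α × V) :=
  ⟨fun R => { u | ∃ (z : Fin (σ.arity R) → V)
      (h : (⟨R, z⟩ : (R : σ.symbols) × (Fin (σ.arity R) → V)) ∈ q.atoms),
      (fun i => (u i).1) ∈ D' ⟨⟨R, z⟩, h⟩ ∧ (fun i => (u i).2) = z }⟩

/-- Analysis of the encoding trick: the variable part of any solution of q over the encoded
database is an endomorphism of q, and if it is an automorphism (with inverse ι), then the
data part composed with ι gives a solution of q' over D'. -/
theorem encoding_trick_analysis {σ : Signature} {V α : Type} (q : CQ σ V)
    (D' : SJFdb σ q α) (μ : V → α × V) (hμ : IsSol q (encDB q D') μ) :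
    IsEndo q (fun x => (μ x).2) ∧
      ∀ ι : V → V, IsEndo q ι →
        Function.LeftInverse ι (fun x => (μ x).2) →
        Function.RightInverse ι (fun x => (μ x).2) →
        (fun x : q.free => (μ (ι x.1)).1) ∈ sjfAnswers q D' := by
  constructor
  · intro a ha
    obtain ⟨z, h, _, hz⟩ := hμ a ha
    have hz' : (fun i => (μ (a.2 i)).2) = z := hz
    rw [hz']
    exact h
  · intro ι hι hli hri
    refine ⟨fun x => (μ (ι x)).1, ?_, fun x => rfl⟩
    intro a
    obtain ⟨z, h, hmem, hz⟩ := hμ ⟨a.1.1, fun i => ι (a.1.2 i)⟩ (hι a.1 a.2)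
    have hzz : z = a.1.2 := by
      funext i
      have := congrFun hz i
      simpa [hri (a.1.2 i)] using this.symm
    subst hzz
    exact hmem
end

section
/- Let q be a minimal Boolean conjunctive query, q' its associated self-join-free query, D' a database for q', and D the database constructed from D' by the encoding trick. Then q has a solution over D if and only if q' has a solution over D'. -/
/-- For a minimal Boolean conjunctive query q (every endomorphism is an automorphism),
q has a solution over the database encoded from D' iff q' has a solution over D'. -/
theorem encoding_trick_boolean {σ : Signature} {V α : Type} (q : CQ σ V)
    (hBool : q.free = (∅ : Set V))
    (hmin : ∀ ν : V → V, IsEndo q ν →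
      ∃ ι : V → V, IsEndo q ι ∧ Function.LeftInverse ι ν ∧ Function.RightInverse ι ν)
    (D' : SJFdb σ q α) :
    (∃ μ : V → α × V, IsSol q (encDB q D') μ) ↔ ∃ μ : V → α, sjfSol q D' μ := by
  constructor
  · rintro ⟨μ, hμ⟩
    -- ν = snd ∘ μ is an endomorphism
    have hν : IsEndo q (fun x => (μ x).2) := by
      rintro ⟨R, z⟩ ha
      obtain ⟨z', h', _, hz'⟩ := hμ ⟨R, z⟩ ha
      have : (fun i => (μ (z i)).2) = z' := hz'
      simpa [this] using h'
    obtain ⟨ι, hι, _, hRI⟩ := hmin _ hν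
    refine ⟨fun x => (μ (ι x)).1, ?_⟩
    rintro ⟨⟨R, z⟩, ha⟩
    have ha' : (⟨R, fun i => ι (z i)⟩ : (R : σ.symbols) × (Fin (σ.arity R) → V)) ∈ q.atoms :=
      hι ⟨R, z⟩ ha
    obtain ⟨z', h', hmem, hz'⟩ := hμ ⟨R, fun i => ι (z i)⟩ ha'
    have hz : z' = z := by
      funext i
      exact (congrFun hz' i).symm.trans (hRI (z i))
    cases hz
    exact hmem
  · rintro ⟨μ, hμ⟩
    refine ⟨fun x => (μ x, x), ?_⟩
    rintro ⟨R, z⟩ ha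
    exact ⟨z, ha, hμ ⟨⟨R, z⟩, ha⟩, rfl⟩
end
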